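/- arXiv:1304.2534 — 2 statements merged into one kernel-verified Lean document; each statement's English description precedes it below -/
import Mathlib

section
/- For every λ ∈ ℂ there exists a unique ℂ-linear map d : U_λ → Ω¹ such that d(1) = 0, d(x₁) = −e₃ ⊗ 1, d(x₂) = e₁ ⊗ 1, d(x₃) = e₂ ⊗ 1, and d satisfies the Leibniz rule d(uv) = u·d(v) + d(u)·v for all u, v ∈ U_λ, where · denotes the left and right U_λ-actions on Ω¹. -/
noncomputable section
open TensorProduct

/-- The bracket of `g_λ` on coordinates: `[x₁,x₂] = 2λx₂`, `[x₁,x₃] = 2λx₃`, `[x₂,x₃] = 0`. -/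
def gbr (l : ℂ) (u v : Fin 3 → ℂ) : Fin 3 → ℂ :=
  ![0, 2 * l * (u 0 * v 1 - u 1 * v 0), 2 * l * (u 0 * v 2 - u 2 * v 0)]

lemma gbr_add_left (l : ℂ) (u v w : Fin 3 → ℂ) :
    gbr l (u + v) w = gbr l u w + gbr l v w := by
  funext i; fin_cases i <;> simp [gbr] <;> ring

lemma gbr_add_right (l : ℂ) (u v w : Fin 3 → ℂ) :
    gbr l u (v + w) = gbr l u v + gbr l u w := by
  funext i; fin_cases i <;> simp [gbr] <;> ring

lemma gbr_self (l : ℂ) (u : Fin 3 → ℂ) : gbr l u u = 0 := by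
  funext i; fin_cases i <;> simp [gbr] <;> ring_nf <;> tauto

lemma gbr_leibniz (l : ℂ) (u v w : Fin 3 → ℂ) :
    gbr l u (gbr l v w) = gbr l (gbr l u v) w + gbr l v (gbr l u w) := by
  funext i; fin_cases i <;> simp [gbr] <;> ring

lemma gbr_smul_right (l c : ℂ) (u v : Fin 3 → ℂ) :
    gbr l u (c • v) = c • gbr l u v := by
  funext i; fin_cases i <;> simp [gbr] <;> ring

/-- The underlying type of the Lie algebra `g_λ`. -/
def G (_l : ℂ) : Type := Fin 3 → ℂ

instance (l : ℂ) : AddCommGroup (G l) := inferInstanceAs (AddCommGroup (Fin 3 → ℂ))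
instance (l : ℂ) : Module ℂ (G l) := inferInstanceAs (Module ℂ (Fin 3 → ℂ))

instance (l : ℂ) : LieRing (G l) :=
  { (inferInstance : AddCommGroup (G l)) with
    bracket := fun u v => gbr l u v
    add_lie := fun u v w => gbr_add_left l u v w
    lie_add := fun u v w => gbr_add_right l u v w
    lie_self := fun u => gbr_self l u
    leibniz_lie := fun u v w => gbr_leibniz l u v w }

instance (l : ℂ) : LieAlgebra ℂ (G l) :=
  { lie_smul := fun c u v => gbr_smul_right l c u v }

attribute [local instance 100] LieRing.ofAssociativeRing

/-- The universal enveloping algebra `U_λ`. -/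
abbrev Uenv (l : ℂ) := UniversalEnvelopingAlgebra ℂ (G l)

/-- The canonical embedding `ι : g_λ → U_λ`. -/
def iotaU (l : ℂ) : G l →ₗ⁅ℂ⁆ Uenv l := UniversalEnvelopingAlgebra.ι ℂ

/-- The basis vector `x_a` of `g_λ` (0-indexed). -/
def xvec (l : ℂ) (a : Fin 3) : G l := (Pi.single a 1 : Fin 3 → ℂ)

/-- The generator `x_a` inside `U_λ`. -/
def Xgen (l : ℂ) (a : Fin 3) : Uenv l := iotaU l (xvec l a)

abbrev V3 := Fin 3 → ℂ

/-- `Ω¹ = ℂ³ ⊗ U_λ`. -/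
abbrev Om1 (l : ℂ) := V3 ⊗[ℂ] Uenv l

/-- The representation matrices `ρ(x₁) = λ diag(1,1,-1)`, `ρ(x₂) = λE₁₃`, `ρ(x₃) = λE₂₃`. -/
def rhoM (l : ℂ) : Fin 3 → Matrix (Fin 3) (Fin 3) ℂ :=
  ![l • Matrix.diagonal ![1, 1, -1],
    l • Matrix.single 0 2 1,
    l • Matrix.single 1 2 1]

/-- The representation `ρ` on a general element of `g_λ`. -/
def rhoLin (l : ℂ) (u : G l) : Matrix (Fin 3) (Fin 3) ℂ :=
  u 0 • rhoM l 0 + u 1 • rhoM l 1 + u 2 • rhoM l 2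

/-- Right action of `U_λ` on `Ω¹`: `(v ⊗ u)·w = v ⊗ (u*w)`. -/
def rAct (l : ℂ) (w : Uenv l) : Om1 l →ₗ[ℂ] Om1 l :=
  LinearMap.lTensor V3 (LinearMap.mulRight ℂ w)

/-- Left action of `x ∈ g_λ` on `Ω¹`: `x·(v ⊗ u) = ρ(x)v ⊗ u + v ⊗ (x*u)`. -/
def lActVec (l : ℂ) (x : G l) : Om1 l →ₗ[ℂ] Om1 l :=
  LinearMap.rTensor (Uenv l) (Matrix.toLin' (rhoLin l x)) +
    LinearMap.lTensor V3 (LinearMap.mulLeft ℂ (iotaU l x))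

/-- The invariant 1-forms: `dx₁ = -e₃`, `dx₂ = e₁`, `dx₃ = e₂` (as vectors in `ℂ³`). -/
def omegaV : Fin 3 → V3 :=
  ![-(Pi.single 2 1), Pi.single 0 1, Pi.single 1 1]

/-- The basic 1-forms `dx_a = ω_a ⊗ 1  ∈ Ω¹`. -/
def dx (l : ℂ) (a : Fin 3) : Om1 l := (omegaV a) ⊗ₜ[ℂ] (1 : Uenv l)

/-! For commuting left and right actions of `U(𝔤)` on `M`, a derivation `d : U(𝔤) → M` is the
same thing as the algebra map `u ↦ ((v, m) ↦ (u * v, u • m + (d u) • v))` into `End (U(𝔤) × M)`.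
By the universal property this algebra map exists as soon as its restriction
`x ↦ ((v, m) ↦ (x * v, x • m + (δ x) • v))` to `𝔤` is a Lie map, and that is exactly the
1-cocycle condition `δ ⁅x, y⁆ = ad x (δ y) - ad y (δ x)`; uniqueness holds since `𝔤` generates
`U(𝔤)`. For `Ω¹ = ℂ³ ⊗ U_λ` and `δ x = ω x ⊗ 1` the cocycle condition reduces to the identity
`ρ(x) ω(y) - ρ(y) ω(x) = ω ⁅x, y⁆` in `ℂ³`. -/

namespace UniversalEnvelopingAlgebra

variable {R L : Type*} [CommRing R] [LieRing L] [LieAlgebra R L]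

@[elab_as_elim]
theorem induction {p : UniversalEnvelopingAlgebra R L → Prop}
    (algebraMap : ∀ r, p (algebraMap R _ r)) (ι : ∀ x, p (ι R x))
    (mul : ∀ u v, p u → p v → p (u * v)) (add : ∀ u v, p u → p v → p (u + v))
    (u : UniversalEnvelopingAlgebra R L) : p u := by
  obtain ⟨t, rfl⟩ := RingCon.mkₐ_surjective (α := R) _ u
  induction t using TensorAlgebra.induction with
  | algebraMap r => exact (mkAlgHom R L).commutes r ▸ algebraMap r
  | ι x => exact ι x
  | mul a b ha hb => exact (map_mul (mkAlgHom R L) a b) ▸ mul _ _ ha hb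
  | add a b ha hb => exact (map_add (mkAlgHom R L) a b) ▸ add _ _ ha hb

theorem ι_lie (x y : L) : ι R ⁅x, y⁆ = ι R x * ι R y - ι R y * ι R x := by
  rw [LieHom.map_lie, Ring.lie_def]

theorem commute_of_forall_commute_ι {A : Type*} [Semiring A] [Algebra R A]
    (f : UniversalEnvelopingAlgebra R L →ₐ[R] A) {b : A} (h : ∀ x, Commute (f (ι R x)) b)
    (u : UniversalEnvelopingAlgebra R L) : Commute (f u) b := by
  induction u using induction with
  | algebraMap r => rw [f.commutes]; exact Algebra.commutes r b
  | ι x => exact h x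
  | mul u v hu hv => rw [map_mul]; exact hu.mul_left hv
  | add u v hu hv => rw [map_add]; exact hu.add_left hv

end UniversalEnvelopingAlgebra

section Biderivation

variable {R A M : Type*} [CommRing R] [Ring A] [Algebra R A] [AddCommGroup M] [Module R M]

def IsBiderivation (Φ : A →ₐ[R] Module.End R M) (Ψ : A →ₐ[R] (Module.End R M)ᵐᵒᵖ)
    (d : A →ₗ[R] M) : Prop :=
  ∀ u v, d (u * v) = Φ u (d v) + (Ψ v).unop (d u)

theorem IsBiderivation.map_one_eq_zero {Φ : A →ₐ[R] Module.End R M}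
    {Ψ : A →ₐ[R] (Module.End R M)ᵐᵒᵖ} {d : A →ₗ[R] M} (hd : IsBiderivation Φ Ψ d) :
    d 1 = 0 := by
  have h := hd 1 1
  rw [mul_one, map_one Φ, map_one Ψ, MulOpposite.unop_one, Module.End.one_apply] at h
  simpa using h

theorem unop_map_mul (Ψ : A →ₐ[R] (Module.End R M)ᵐᵒᵖ) (u v : A) :
    (Ψ (u * v)).unop = (Ψ v).unop * (Ψ u).unop := by
  rw [map_mul, MulOpposite.unop_mul]

end Biderivation

namespace UniversalEnvelopingAlgebra

variable {R L M : Type*} [CommRing R] [LieRing L] [LieAlgebra R L] [AddCommGroup M] [Module R M]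
  {Φ : UniversalEnvelopingAlgebra R L →ₐ[R] Module.End R M}
  {Ψ : UniversalEnvelopingAlgebra R L →ₐ[R] (Module.End R M)ᵐᵒᵖ}

theorem IsBiderivation.ext_ι {d d' : UniversalEnvelopingAlgebra R L →ₗ[R] M}
    (hd : IsBiderivation Φ Ψ d) (hd' : IsBiderivation Φ Ψ d') (h : ∀ x, d (ι R x) = d' (ι R x)) :
    d = d' := by
  ext u
  induction u using induction with
  | algebraMap r =>
    rw [Algebra.algebraMap_eq_smul_one, map_smul, map_smul, hd.map_one_eq_zero,
      hd'.map_one_eq_zero]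
  | ι x => exact h x
  | mul u v hu hv => rw [hd, hd', hu, hv]
  | add u v hu hv => rw [map_add, map_add, hu, hv]

variable (Φ Ψ) (δ : L →ₗ[R] M)

def cocycleAction (x : L) : Module.End R (UniversalEnvelopingAlgebra R L × M) where
  toFun p := (ι R x * p.1, Φ (ι R x) p.2 + (Ψ p.1).unop (δ x))
  map_add' p q := by
    ext
    · exact mul_add _ _ _
    · simp only [Prod.fst_add, Prod.snd_add, map_add, MulOpposite.unop_add, LinearMap.add_apply]
      abel
  map_smul' c p := by
    ext
    · exact mul_smul_comm _ _ _
    · simp [map_smul, MulOpposite.unop_smul, LinearMap.smul_apply, smul_add]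

@[simp]
theorem cocycleAction_apply (x : L) (u : UniversalEnvelopingAlgebra R L) (m : M) :
    cocycleAction Φ Ψ δ x (u, m) = (ι R x * u, Φ (ι R x) m + (Ψ u).unop (δ x)) :=
  rfl

def IsCocycle : Prop :=
  ∀ x y, δ ⁅x, y⁆ = Φ (ι R x) (δ y) - (Ψ (ι R x)).unop (δ y)
    - (Φ (ι R y) (δ x) - (Ψ (ι R y)).unop (δ x))

def cocycleLieHom (hcomm : ∀ u w, Commute (Φ u) (Ψ w).unop) (hδ : IsCocycle Φ Ψ δ) :
    L →ₗ⁅R⁆ Module.End R (UniversalEnvelopingAlgebra R L × M) where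
  toFun := cocycleAction Φ Ψ δ
  map_add' x y := by
    refine LinearMap.ext fun ⟨u, m⟩ => ?_
    simp only [cocycleAction_apply, LinearMap.add_apply, map_add, add_mul, LinearMap.add_apply,
      Prod.mk_add_mk]
    congr 1; abel
  map_smul' c x := by
    refine LinearMap.ext fun ⟨u, m⟩ => ?_
    simp
  map_lie' {x y} := by
    refine LinearMap.ext fun ⟨u, m⟩ => ?_
    have hxu : Φ (ι R x) ((Ψ u).unop (δ y)) = (Ψ u).unop (Φ (ι R x) (δ y)) :=
      LinearMap.congr_fun (hcomm (ι R x) u) (δ y)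
    have hyu : Φ (ι R y) ((Ψ u).unop (δ x)) = (Ψ u).unop (Φ (ι R y) (δ x)) :=
      LinearMap.congr_fun (hcomm (ι R y) u) (δ x)
    simp only [Ring.lie_def, LinearMap.sub_apply, Module.End.mul_apply, cocycleAction_apply,
      ι_lie, hδ x y, map_sub, unop_map_mul, map_mul Φ, map_add, hxu, hyu, Prod.mk_sub_mk, sub_mul,
      mul_assoc]
    congr 1
    abel

variable {Φ Ψ δ}
  (hcomm : ∀ u w, Commute (Φ u) (Ψ w).unop) (hδ : IsCocycle Φ Ψ δ)

local notation "ψ" => lift R (cocycleLieHom Φ Ψ δ hcomm hδ)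

def cocycleDerivation : UniversalEnvelopingAlgebra R L →ₗ[R] M :=
  LinearMap.snd R _ M ∘ₗ LinearMap.applyₗ ((1, 0) : UniversalEnvelopingAlgebra R L × M) ∘ₗ
    (ψ).toLinearMap

local notation "d" => cocycleDerivation hcomm hδ

theorem cocycleDerivation_mul_of_lift_apply {a b : UniversalEnvelopingAlgebra R L}
    (ha : ψ a (b, d b) = (a * b, Φ a (d b) + (Ψ b).unop (d a)))
    (hb : ψ b (1, 0) = (b * 1, Φ b 0 + (Ψ 1).unop (d b))) :
    d (a * b) = Φ a (d b) + (Ψ b).unop (d a) := by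
  change (ψ (a * b) (1, 0)).2 = _
  simp [map_mul, hb, ha]

theorem lift_cocycleLieHom_apply (u v : UniversalEnvelopingAlgebra R L) (m : M) :
    ψ u (v, m) = (u * v, Φ u m + (Ψ v).unop (d u)) := by
  induction u using induction generalizing v m with
  | algebraMap r =>
    simp [cocycleDerivation, Module.algebraMap_end_apply, Algebra.smul_def]
  | ι x =>
    simp [cocycleDerivation, cocycleLieHom]
  | mul a b ha hb =>
    have hav : Φ a ((Ψ v).unop (d b)) = (Ψ v).unop (Φ a (d b)) :=
      LinearMap.congr_fun (hcomm a v).eq _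
    rw [cocycleDerivation_mul_of_lift_apply hcomm hδ (ha _ _) (hb _ _), map_mul,
      Module.End.mul_apply, hb, ha, mul_assoc, map_add, hav, unop_map_mul, map_mul Φ, map_add,
      add_assoc]
    rfl
  | add a b ha hb =>
    simp [ha, hb, add_mul]
    abel

theorem isBiderivation_cocycleDerivation : IsBiderivation Φ Ψ d := fun u v =>
  cocycleDerivation_mul_of_lift_apply hcomm hδ (lift_cocycleLieHom_apply hcomm hδ u v _)
    (lift_cocycleLieHom_apply hcomm hδ v 1 0)

theorem cocycleDerivation_ι (x : L) : d (ι R x) = δ x := by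
  simp [cocycleDerivation, cocycleLieHom]

end UniversalEnvelopingAlgebra

open UniversalEnvelopingAlgebra

theorem existsUnique_isBiderivation_extending {R L M : Type*} [CommRing R] [LieRing L]
    [LieAlgebra R L] [AddCommGroup M] [Module R M]
    (Φ : UniversalEnvelopingAlgebra R L →ₐ[R] Module.End R M)
    (Ψ : UniversalEnvelopingAlgebra R L →ₐ[R] (Module.End R M)ᵐᵒᵖ) (δ : L →ₗ[R] M)
    (hcomm : ∀ u w, Commute (Φ u) (Ψ w).unop) (hδ : IsCocycle Φ Ψ δ) :
    ∃! d : UniversalEnvelopingAlgebra R L →ₗ[R] M, (∀ x, d (ι R x) = δ x) ∧ IsBiderivation Φ Ψ d :=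
  ⟨cocycleDerivation hcomm hδ,
    ⟨cocycleDerivation_ι hcomm hδ, isBiderivation_cocycleDerivation hcomm hδ⟩,
    fun _ ⟨hι, hd⟩ => hd.ext_ι (isBiderivation_cocycleDerivation hcomm hδ) fun x => by
      rw [hι, cocycleDerivation_ι]⟩

section Differential

variable (l : ℂ)

theorem G.lie_def (x y : G l) : ⁅x, y⁆ = gbr l x y := rfl

def rActAlgHom : Uenv l →ₐ[ℂ] (Module.End ℂ (Om1 l))ᵐᵒᵖ :=
  AlgHom.ofLinearMap
    ((MulOpposite.opLinearEquiv ℂ).toLinearMap ∘ₗ LinearMap.lTensorHom V3 ∘ₗ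
      (LinearMap.mul ℂ (Uenv l)).flip)
    (congrArg MulOpposite.op <| show rAct l 1 = 1 by
      rw [rAct, LinearMap.mulRight_one, LinearMap.lTensor_id]; rfl)
    fun a b => congrArg MulOpposite.op <| show rAct l (a * b) = rAct l b * rAct l a by
      rw [rAct, LinearMap.mulRight_mul, LinearMap.lTensor_comp]; rfl

theorem rActAlgHom_unop (w : Uenv l) : (rActAlgHom l w).unop = rAct l w := rfl

theorem rAct_tmul (v : V3) (u w : Uenv l) : rAct l w (v ⊗ₜ u) = v ⊗ₜ (u * w) := rfl

theorem lActVec_tmul (x : G l) (v : V3) (u : Uenv l) :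
    lActVec l x (v ⊗ₜ u) = Matrix.toLin' (rhoLin l x) v ⊗ₜ u + v ⊗ₜ (ι ℂ x * u) := rfl

theorem commute_lActVec_rAct (x : G l) (w : Uenv l) : Commute (lActVec l x) (rAct l w) := by
  apply TensorProduct.ext'
  intro v u
  simp [Module.End.mul_apply, lActVec_tmul, rAct_tmul, mul_assoc]

def omegaForm : G l →ₗ[ℂ] V3 := Fintype.linearCombination ℂ omegaV

theorem omegaForm_apply (x : G l) : omegaForm l x = ∑ a, x a • omegaV a := rfl

theorem omegaForm_xvec (a : Fin 3) : omegaForm l (xvec l a) = omegaV a :=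
  (Fintype.linearCombination_apply_single ℂ omegaV a 1).trans (one_smul ℂ _)

theorem toLin'_rhoLin_omegaForm (x y : G l) :
    Matrix.toLin' (rhoLin l x) (omegaForm l y) - Matrix.toLin' (rhoLin l y) (omegaForm l x) =
      omegaForm l ⁅x, y⁆ := by
  simp only [omegaForm_apply]
  funext i
  fin_cases i <;>
    simp [Fin.sum_univ_three, G.lie_def, gbr, omegaV,
      rhoLin, rhoM, Matrix.toLin'_apply, Matrix.mulVec, dotProduct, Matrix.single,
      Matrix.diagonal, Pi.single_apply] <;> ring

def dxLin : G l →ₗ[ℂ] Om1 l := (TensorProduct.mk ℂ V3 (Uenv l)).flip 1 ∘ₗ omegaForm l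

theorem dxLin_xvec (a : Fin 3) : dxLin l (xvec l a) = dx l a := by
  simp [dxLin, dx, omegaForm_xvec]

theorem dxLin_lie (x y : G l) :
    dxLin l ⁅x, y⁆ = lActVec l x (dxLin l y) - rAct l (ι ℂ x) (dxLin l y)
      - (lActVec l y (dxLin l x) - rAct l (ι ℂ y) (dxLin l x)) := by
  simp only [dxLin, LinearMap.comp_apply, LinearMap.flip_apply, TensorProduct.mk_apply,
    lActVec_tmul, rAct_tmul, ← toLin'_rhoLin_omegaForm, TensorProduct.sub_tmul, mul_one, one_mul]
  abel

end Differential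

/-- There is a unique `ℂ`-linear map `d : U_λ → Ω¹` with `d(1) = 0`,
`d(x₁) = -e₃ ⊗ 1`, `d(x₂) = e₁ ⊗ 1`, `d(x₃) = e₂ ⊗ 1`, satisfying the Leibniz rule
`d(uv) = u·d(v) + d(u)·v` with respect to the `U_λ`-bimodule structure of `Ω¹`. -/
theorem exists_unique_differential (l : ℂ)
    (Φ : Uenv l →ₐ[ℂ] Module.End ℂ (Om1 l))
    (hΦ : ∀ x : G l, Φ (iotaU l x) = lActVec l x) :
    ∃! d : Uenv l →ₗ[ℂ] Om1 l,
      d 1 = 0 ∧ (∀ a : Fin 3, d (Xgen l a) = dx l a) ∧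
      ∀ u v : Uenv l, d (u * v) = Φ u (d v) + rAct l v (d u) := by
  have hΦι : ∀ x : G l, Φ (ι ℂ x) = lActVec l x := hΦ
  have hcomm (u w : Uenv l) : Commute (Φ u) (rActAlgHom l w).unop := by
    refine commute_of_forall_commute_ι Φ (fun x => ?_) u
    rw [hΦι]
    exact commute_lActVec_rAct l x w
  have hδ : IsCocycle Φ (rActAlgHom l) (dxLin l) := fun x y => by
    simpa only [hΦι, rActAlgHom_unop] using dxLin_lie l x y
  refine (existsUnique_congr fun d => ?_).mp <|
    existsUnique_isBiderivation_extending Φ (rActAlgHom l) (dxLin l) hcomm hδ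
  constructor
  · rintro ⟨hι, hd⟩
    exact ⟨hd.map_one_eq_zero, fun a => (hι _).trans (dxLin_xvec l a), hd⟩
  · rintro ⟨-, hX, hd⟩
    have hdι : d ∘ₗ (ι ℂ : G l →ₗ⁅ℂ⁆ Uenv l).toLinearMap = dxLin l :=
      (Pi.basisFun ℂ (Fin 3)).ext fun a => by
        rw [Pi.basisFun_apply]
        exact (hX a).trans (dxLin_xvec l a).symm
    exact ⟨fun x => LinearMap.congr_fun hdι x, hd⟩
end
end

section
/- For every λ ∈ ℂ, the maps d, d₁, d₂ form a complex: d₁ ∘ d = 0 as a map U_λ → Λ²ℂ³ ⊗ U_λ, and d₂ ∘ d₁ = 0 as a map ℂ³ ⊗ U_λ → Λ³ℂ³ ⊗ U_λ. -/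
set_option synthInstance.maxHeartbeats 1000000
set_option maxHeartbeats 1000000

noncomputable section
open TensorProduct

attribute [local instance] LieRing.ofAssociativeRing LieAlgebra.ofAssociativeAlgebra

abbrev ExtA := ExteriorAlgebra ℂ V3

/-- Wedge of a vector with a vector, landing in `Λ²ℂ³`. -/
def wedge1 (v : V3) : V3 →ₗ[ℂ] ⋀[ℂ]^2 V3 where
  toFun w := ⟨ExteriorAlgebra.ι ℂ v * ExteriorAlgebra.ι ℂ w, by
    show _ ∈ (LinearMap.range (ExteriorAlgebra.ι ℂ : V3 →ₗ[ℂ] ExtA)) ^ 2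
    rw [sq]
    exact Submodule.mul_mem_mul (LinearMap.mem_range_self _ v) (LinearMap.mem_range_self _ w)⟩
  map_add' w₁ w₂ := by ext; simp [mul_add]
  map_smul' c w := by ext; simp [Algebra.mul_smul_comm]

/-- Wedge of a 2-vector with a vector, landing in `Λ³ℂ³`. -/
def wedge2 (b : ⋀[ℂ]^2 V3) : V3 →ₗ[ℂ] ⋀[ℂ]^3 V3 where
  toFun w := ⟨(b : ExtA) * ExteriorAlgebra.ι ℂ w, by
    show _ ∈ (LinearMap.range (ExteriorAlgebra.ι ℂ : V3 →ₗ[ℂ] ExtA)) ^ 3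
    rw [pow_succ]
    exact Submodule.mul_mem_mul b.2 (LinearMap.mem_range_self _ w)⟩
  map_add' w₁ w₂ := by ext; simp [mul_add]
  map_smul' c w := by ext; simp [Algebra.mul_smul_comm]

/-- `Ω² = Λ²ℂ³ ⊗ U_λ`. -/
abbrev Om2 (l : ℂ) := (⋀[ℂ]^2 V3) ⊗[ℂ] Uenv l

/-- `Ω³ = Λ³ℂ³ ⊗ U_λ`. -/
abbrev Om3 (l : ℂ) := (⋀[ℂ]^3 V3) ⊗[ℂ] Uenv l

/-!
Both identities come down to `d₁ ∘ d = 0`, since `d₂ (d₁ (v ⊗ u)) = v ∧ d₁ (d u)`. As `U_λ` is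
generated by `g_λ`, the kernel of `d₁ ∘ d`, which contains `1`, is all of `U_λ` as soon as it is
stable under left multiplication by every `x ∈ g_λ`. The Leibniz rule gives
`d (x u) = x · d u + ω(x) ⊗ u` with `ω(x) ∈ ℂ³`, and `d₁ ∘ (x ·) = (ρ₂(x) ⊗ 1 + 1 ⊗ x) ∘ d₁ - ω(x) ∧ ·`
on `Ω¹`, where `ρ₂(x)` is the derivation action of `ρ(x)` on `Λ²ℂ³`. Hence
`d₁ (d (x u)) = -ω(x) ∧ d u + d₁ (ω(x) ⊗ u) = 0` whenever `d₁ (d u) = 0`.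
-/

namespace UniversalEnvelopingAlgebra

variable {R L : Type*} [CommRing R] [LieRing L] [LieAlgebra R L]

theorem adjoin_range_ι :
    Algebra.adjoin R (Set.range (ι R : L → UniversalEnvelopingAlgebra R L)) = ⊤ := by
  have hsurj : Function.Surjective (mkAlgHom R L) := RingCon.mk'_surjective _
  rw [← (AlgHom.range_eq_top _).mpr hsurj, ← Algebra.map_top,
    ← TensorAlgebra.adjoin_range_ι, AlgHom.map_adjoin, ← Set.range_comp]
  rfl

theorem eq_top_of_one_mem_of_ι_mul_mem {N : Submodule R (UniversalEnvelopingAlgebra R L)}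
    (h1 : 1 ∈ N) (hι : ∀ x, ∀ u ∈ N, ι R x * u ∈ N) : N = ⊤ := by
  have hmul : ∀ w, ∀ u ∈ N, w * u ∈ N := by
    intro w
    have hw : w ∈ Algebra.adjoin R (Set.range (ι R : L → UniversalEnvelopingAlgebra R L)) := by
      rw [adjoin_range_ι]; trivial
    induction hw using Algebra.adjoin_induction with
    | mem _ hx => obtain ⟨x, rfl⟩ := hx; exact hι x
    | algebraMap r => intro u hu; rw [← Algebra.smul_def]; exact N.smul_mem r hu
    | add a b _ _ ha hb => intro u hu; rw [add_mul]; exact N.add_mem (ha u hu) (hb u hu)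
    | mul a b _ _ ha hb => intro u hu; rw [mul_assoc]; exact ha _ (hb u hu)
  exact eq_top_iff.mpr fun w _ => mul_one w ▸ hmul w 1 h1

end UniversalEnvelopingAlgebra

namespace exteriorPower

variable {R M : Type*} [CommRing R] [AddCommGroup M] [Module R M]

/-- The part of `⋀²(1 + f)` that is linear in `f`: the derivation action of `f` on `⋀²M`. -/
def derivTwo (f : Module.End R M) : Module.End R (⋀[R]^2 M) :=
  map 2 (1 + f) - 1 - map 2 f

lemma coe_ιMulti_pair (v w : M) :
    (ιMulti R 2 ![v, w] : ExteriorAlgebra R M) =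
      ExteriorAlgebra.ι R v * ExteriorAlgebra.ι R w := by
  simp [ExteriorAlgebra.ιMulti_succ_apply, ExteriorAlgebra.ιMulti_zero_apply, Matrix.vecTail]

theorem derivTwo_ιMulti (f : Module.End R M) (v w : M) :
    derivTwo f (ιMulti R 2 ![v, w]) = ιMulti R 2 ![f v, w] + ιMulti R 2 ![v, f w] := by
  have hcomp (g : Module.End R M) : g ∘ ![v, w] = ![g v, g w] := by
    ext i; fin_cases i <;> rfl
  apply Subtype.ext
  simp only [derivTwo, LinearMap.sub_apply, map_apply_ιMulti, hcomp, Module.End.one_apply,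
    LinearMap.add_apply, Submodule.coe_sub, Submodule.coe_add, coe_ιMulti_pair, map_add,
    add_mul, mul_add]
  abel

end exteriorPower

lemma wedge1_eq_ιMulti (v w : V3) : wedge1 v w = exteriorPower.ιMulti ℂ 2 ![v, w] :=
  Subtype.ext (exteriorPower.coe_ιMulti_pair v w).symm

lemma wedge1_swap (v w : V3) : wedge1 v w = -wedge1 w v :=
  eq_neg_of_add_eq_zero_left (Subtype.ext (ExteriorAlgebra.ι_add_mul_swap v w))

def wedgeLeft (v : V3) : ⋀[ℂ]^2 V3 →ₗ[ℂ] ⋀[ℂ]^3 V3 where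
  toFun b := ⟨ExteriorAlgebra.ι ℂ v * (b : ExtA), by
    show _ ∈ (LinearMap.range (ExteriorAlgebra.ι ℂ : V3 →ₗ[ℂ] ExtA)) ^ (1 + 2)
    rw [pow_add, pow_one]
    exact Submodule.mul_mem_mul (LinearMap.mem_range_self _ v) b.2⟩
  map_add' b b' := by ext; simp [mul_add]
  map_smul' c b := by ext; simp [Algebra.mul_smul_comm]

lemma wedge2_wedge1 (v w : V3) : wedge2 (wedge1 v w) = wedgeLeft v ∘ₗ wedge1 w :=
  LinearMap.ext fun _ => Subtype.ext (mul_assoc _ _ _)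

section FirstDifferential

open LinearMap UniversalEnvelopingAlgebra

variable {L : Type*} [LieRing L] [LieAlgebra ℂ L] {ρ : L → Module.End ℂ V3} {ω : L → V3}
  {d : UniversalEnvelopingAlgebra ℂ L →ₗ[ℂ] V3 ⊗[ℂ] UniversalEnvelopingAlgebra ℂ L}
  {D1 : V3 ⊗[ℂ] UniversalEnvelopingAlgebra ℂ L →ₗ[ℂ]
    ⋀[ℂ]^2 V3 ⊗[ℂ] UniversalEnvelopingAlgebra ℂ L}
  (hd : ∀ x u, d (ι ℂ x * u) = (rTensor (UniversalEnvelopingAlgebra ℂ L) (ρ x) +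
    lTensor V3 (mulLeft ℂ (ι ℂ x))) (d u) + ω x ⊗ₜ u)
  (hD1 : ∀ v u, D1 (v ⊗ₜ u) = rTensor (UniversalEnvelopingAlgebra ℂ L) (wedge1 v) (d u))

local notation "𝔘" => UniversalEnvelopingAlgebra ℂ L

include hd hD1

lemma D1_leftAction (x : L) (m : V3 ⊗[ℂ] 𝔘) :
    D1 ((rTensor 𝔘 (ρ x) + lTensor V3 (mulLeft ℂ (ι ℂ x))) m) =
      (rTensor 𝔘 (exteriorPower.derivTwo (ρ x)) + lTensor (⋀[ℂ]^2 V3) (mulLeft ℂ (ι ℂ x))) (D1 m)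
        - rTensor 𝔘 (wedge1 (ω x)) m := by
  induction m using TensorProduct.induction_on with
  | zero => simp
  | add m n hm hn => simp only [map_add, hm, hn]; abel
  | tmul v u =>
    have hderiv (m : V3 ⊗[ℂ] 𝔘) :
        rTensor 𝔘 (wedge1 (ρ x v)) m + rTensor 𝔘 (wedge1 v) (rTensor 𝔘 (ρ x) m) =
          rTensor 𝔘 (exteriorPower.derivTwo (ρ x)) (rTensor 𝔘 (wedge1 v) m) := by
      have h : wedge1 (ρ x v) + wedge1 v ∘ₗ ρ x = exteriorPower.derivTwo (ρ x) ∘ₗ wedge1 v :=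
        LinearMap.ext fun w => by simp [wedge1_eq_ιMulti, exteriorPower.derivTwo_ιMulti]
      rw [← rTensor_comp_apply, ← rTensor_comp_apply, ← h, rTensor_add, LinearMap.add_apply]
    have hcomm (m : V3 ⊗[ℂ] 𝔘) : rTensor 𝔘 (wedge1 v) (lTensor V3 (mulLeft ℂ (ι ℂ x)) m) =
        lTensor (⋀[ℂ]^2 V3) (mulLeft ℂ (ι ℂ x)) (rTensor 𝔘 (wedge1 v) m) := by
      rw [← comp_apply, ← comp_apply, rTensor_comp_lTensor, lTensor_comp_rTensor]
    rw [LinearMap.add_apply, rTensor_tmul, lTensor_tmul, mulLeft_apply, map_add, hD1, hD1, hd,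
      LinearMap.add_apply, map_add, map_add, rTensor_tmul, wedge1_swap, neg_tmul, hcomm,
      rTensor_tmul, hD1, LinearMap.add_apply, ← hderiv]
    abel

lemma D1_d_ι_mul_eq_zero (x : L) {u : 𝔘} (hu : D1 (d u) = 0) : D1 (d (ι ℂ x * u)) = 0 := by
  rw [hd, map_add, D1_leftAction hd hD1, hu, map_zero, hD1]
  exact sub_add_cancel 0 _

theorem D1_d_eq_zero (hd1 : d 1 = 0) (u : 𝔘) : D1 (d u) = 0 := by
  have hker : ker (D1 ∘ₗ d) = ⊤ :=
    eq_top_of_one_mem_of_ι_mul_mem (by simp [hd1]) fun x _ hu => D1_d_ι_mul_eq_zero hd hD1 x hu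
  exact congrArg (· u) (ker_eq_top.mp hker)

end FirstDifferential

section SecondDifferential

open LinearMap

variable {A : Type*} [AddCommGroup A] [Module ℂ A] {d : A →ₗ[ℂ] V3 ⊗[ℂ] A}
  {D1 : V3 ⊗[ℂ] A →ₗ[ℂ] ⋀[ℂ]^2 V3 ⊗[ℂ] A} {D2 : ⋀[ℂ]^2 V3 ⊗[ℂ] A →ₗ[ℂ] ⋀[ℂ]^3 V3 ⊗[ℂ] A}
  (hD1 : ∀ v u, D1 (v ⊗ₜ u) = rTensor A (wedge1 v) (d u))
  (hD2 : ∀ b u, D2 (b ⊗ₜ u) = rTensor A (wedge2 b) (d u))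
include hD1 hD2

lemma D2_rTensor_wedge1 (v : V3) (m : V3 ⊗[ℂ] A) :
    D2 (rTensor A (wedge1 v) m) = rTensor A (wedgeLeft v) (D1 m) := by
  induction m using TensorProduct.induction_on with
  | zero => simp
  | add m n hm hn => simp only [map_add, hm, hn]
  | tmul w u => rw [rTensor_tmul, hD2, hD1, wedge2_wedge1, rTensor_comp_apply]

theorem D2_D1_eq_zero (hD1d : ∀ u, D1 (d u) = 0) (m : V3 ⊗[ℂ] A) : D2 (D1 m) = 0 := by
  induction m using TensorProduct.induction_on with
  | zero => simp
  | add m n hm hn => simp only [map_add, hm, hn, add_zero]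
  | tmul v u => rw [hD1, D2_rTensor_wedge1 hD1 hD2, hD1d, map_zero]

end SecondDifferential

lemma d_iotaU {l : ℂ} {d : Uenv l →ₗ[ℂ] Om1 l} (hdx : ∀ a, d (Xgen l a) = dx l a) (x : G l) :
    d (iotaU l x) = (∑ a, x a • omegaV a) ⊗ₜ 1 := by
  have hx : x = ∑ a, x a • xvec l a := by
    show (x : Fin 3 → ℂ) = (∑ a, x a • Pi.single a 1 : Fin 3 → ℂ)
    funext i; fin_cases i <;> simp [Fin.sum_univ_three]
  simp only [Xgen, dx] at hdx
  conv_lhs => rw [hx]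
  simp only [map_sum, map_smul, hdx, sum_tmul, smul_tmul']

/-- `d`, `d₁`, `d₂` form a complex: `d₁ ∘ d = 0` and `d₂ ∘ d₁ = 0`. -/
theorem differential_complex (l : ℂ)
    (Φ : Uenv l →ₐ[ℂ] Module.End ℂ (Om1 l))
    (hΦ : ∀ x : G l, Φ (iotaU l x) = lActVec l x)
    (d : Uenv l →ₗ[ℂ] Om1 l)
    (hd1 : d 1 = 0) (hdx : ∀ a : Fin 3, d (Xgen l a) = dx l a)
    (hleib : ∀ u v : Uenv l, d (u * v) = Φ u (d v) + rAct l v (d u))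
    (D1 : Om1 l →ₗ[ℂ] Om2 l)
    (hD1 : ∀ (v : V3) (u : Uenv l),
      D1 (v ⊗ₜ[ℂ] u) = LinearMap.rTensor (Uenv l) (wedge1 v) (d u))
    (D2 : Om2 l →ₗ[ℂ] Om3 l)
    (hD2 : ∀ (b : ⋀[ℂ]^2 V3) (u : Uenv l),
      D2 (b ⊗ₜ[ℂ] u) = LinearMap.rTensor (Uenv l) (wedge2 b) (d u)) :
    (∀ u : Uenv l, D1 (d u) = 0) ∧ (∀ w : Om1 l, D2 (D1 w) = 0) := by
  have hd (x : G l) (u : Uenv l) :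
      d (iotaU l x * u) = lActVec l x (d u) + (∑ a, x a • omegaV a) ⊗ₜ u := by
    rw [hleib, hΦ, d_iotaU hdx, rAct, LinearMap.lTensor_tmul, LinearMap.mulRight_apply, one_mul]
  have hD1d := D1_d_eq_zero hd hD1 hd1
  exact ⟨hD1d, D2_D1_eq_zero hD1 hD2 hD1d⟩
end
end
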